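/- Let F be any field and C, D ∈ F[x,y]. If C and D are algebraically dependent over F, then Jac(C,D) = 0. -/

import Mathlib

/-!
Suppose `Jac(P,Q) ≠ 0` and let `G ≠ 0` have least total degree with `G(P,Q) = 0`. By the chain
rule, `(∂G/∂s)(P,Q)` and `(∂G/∂t)(P,Q)` are both annihilated by `Jac(P,Q)`, so by minimality
both partial derivatives of `G` vanish. In characteristic zero this makes `G` constant; in
characteristic `p` it makes `G` a polynomial in `s^p, t^p`, hence a `p`-th power `H^p` as soon as
the coefficients have `p`-th roots, and then `H(P,Q) = 0` with `H` of smaller degree. Base change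
to the algebraic closure provides the roots and changes neither the Jacobian nor dependence.
-/

open MvPolynomial

/-- The Jacobian of two polynomials `p, q ∈ R[x,y]`:
`Jac(p,q) = (∂p/∂x)(∂q/∂y) − (∂p/∂y)(∂q/∂x)`. -/
noncomputable def Jac {R : Type*} [CommRing R]
    (p q : MvPolynomial (Fin 2) R) : MvPolynomial (Fin 2) R :=
  pderiv 0 p * pderiv 1 q - pderiv 1 p * pderiv 0 q

namespace MvPolynomial

variable {σ τ R : Type*}

section CommSemiring

variable [CommSemiring R]

theorem totalDegree_map_le {S : Type*} [CommSemiring S] (f : R →+* S) (p : MvPolynomial σ R) :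
    (map f p).totalDegree ≤ p.totalDegree :=
  Finset.sup_mono (support_map_subset f p)

theorem totalDegree_pderiv_lt {i : σ} {f : MvPolynomial σ R} (h : pderiv i f ≠ 0) :
    (pderiv i f).totalDegree < f.totalDegree := by
  obtain ⟨m₀, hm₀⟩ := support_nonempty.2 h
  have key : ∀ m ∈ (pderiv i f).support, (m.sum fun _ e => e) < f.totalDegree := by
    intro m hm
    have hc : coeff (m + Finsupp.single i 1) f ≠ 0 := by
      rw [mem_support_iff, coeff_pderiv] at hm
      exact left_ne_zero_of_mul hm
    have hle := le_totalDegree (mem_support_iff.2 hc)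
    rw [Finsupp.sum_add_index' (fun _ => rfl) (fun _ _ _ => rfl), Finsupp.sum_single_index rfl]
      at hle
    omega
  exact (Finset.sup_lt_iff (lt_of_le_of_lt (Nat.zero_le _) (key m₀ hm₀))).2 key

theorem pderiv_aeval [Fintype τ] (v : τ → MvPolynomial σ R) (i : σ) (G : MvPolynomial τ R) :
    pderiv i (aeval v G) = ∑ j, aeval v (pderiv j G) * pderiv i (v j) := by
  classical
  induction G using MvPolynomial.induction_on with
  | C c => simp
  | add p q hp hq => simp only [map_add, hp, hq, add_mul, Finset.sum_add_distrib]
  | mul_X p j hp =>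
    simp only [map_mul, aeval_X, pderiv_mul, hp, map_add, pderiv_X, add_mul,
      Finset.sum_add_distrib, Finset.sum_mul]
    simp [Pi.single_apply, mul_right_comm _ (v j)]

theorem exists_expand_eq_of_dvd (p : ℕ) {f : MvPolynomial σ R}
    (h : ∀ m ∈ f.support, ∀ i, p ∣ m i) : ∃ g, expand p g = f := by
  suffices f ∈ (expand p : MvPolynomial σ R →ₐ[R] MvPolynomial σ R).range from this
  rw [← support_sum_monomial_coeff f]
  refine Subalgebra.sum_mem _ fun m hm =>
    ⟨monomial (m.mapRange (· / p) (Nat.zero_div p)) (coeff m f), ?_⟩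
  rw [AlgHom.toRingHom_eq_coe, RingHom.coe_coe, expand_monomial]
  congr 2
  ext i
  simpa using Nat.mul_div_cancel' (h m hm i)

theorem map_frobeniusEquiv_symm_pow (p : ℕ) [ExpChar R p] [PerfectRing R p]
    (f : MvPolynomial σ R) :
    map (frobeniusEquiv R p).symm f ^ p = expand p f := by
  rw [← map_frobenius_expand, ← map_expand, map_map, frobenius_comp_frobeniusEquiv_symm, map_id]

theorem totalDegree_pos_of_aeval_eq_zero {A : Type*} [CommSemiring A] [Algebra R A]
    (hinj : Function.Injective (algebraMap R A)) {v : σ → A} {f : MvPolynomial σ R}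
    (hf : f ≠ 0) (h : aeval v f = 0) : 0 < f.totalDegree := by
  by_contra! h0
  rw [Nat.le_zero, totalDegree_eq_zero_iff_eq_C] at h0
  rw [h0, aeval_C, map_eq_zero_iff _ hinj] at h
  exact hf (by rw [h0, h, C_0])

end CommSemiring

theorem ringChar_dvd_of_pderiv_eq_zero [CommRing R] [NoZeroDivisors R] {f : MvPolynomial σ R}
    (h : ∀ i, pderiv i f = 0) {m : σ →₀ ℕ} (hm : m ∈ f.support) (i : σ) :
    ringChar R ∣ m i := by
  rcases eq_or_ne (m i) 0 with hmi | hmi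
  · simp [hmi]
  rw [← CharP.cast_eq_zero_iff R]
  have := coeff_pderiv (i := i) f (m - Finsupp.single i 1)
  rw [h i, coeff_zero, Finsupp.sub_add_single_one_cancel hmi] at this
  have hcast : ((m - Finsupp.single i 1 : σ →₀ ℕ) i + 1 : ℕ) = m i := by
    rw [Finsupp.tsub_apply, Finsupp.single_eq_same]; omega
  rw [← hcast, Nat.cast_succ]
  exact (mul_eq_zero.1 this.symm).resolve_left (mem_support_iff.1 hm)

end MvPolynomial

theorem map_jac {R S : Type*} [CommRing R] [CommRing S] (f : R →+* S)
    (p q : MvPolynomial (Fin 2) R) : map f (Jac p q) = Jac (map f p) (map f q) := by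
  simp only [Jac, map_sub, map_mul, pderiv_map]

theorem aeval_pderiv_mul_jac_eq_zero {R : Type*} [CommRing R] {P Q G : MvPolynomial (Fin 2) R}
    (h : aeval ![P, Q] G = 0) (j : Fin 2) : aeval ![P, Q] (pderiv j G) * Jac P Q = 0 := by
  have chain (i : Fin 2) :
      aeval ![P, Q] (pderiv 0 G) * pderiv i P + aeval ![P, Q] (pderiv 1 G) * pderiv i Q = 0 := by
    have := pderiv_aeval ![P, Q] i G
    rw [h, map_zero, Fin.sum_univ_two] at this
    exact this.symm
  unfold Jac
  obtain rfl | rfl : j = 0 ∨ j = 1 := by omega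
  · linear_combination pderiv 1 Q * chain 0 - pderiv 0 Q * chain 1
  · linear_combination pderiv 0 P * chain 1 - pderiv 1 P * chain 0

theorem algebraicIndependent_of_jac_ne_zero {K : Type*} [Field K] [PerfectField K]
    {P Q : MvPolynomial (Fin 2) K} (hJ : Jac P Q ≠ 0) : AlgebraicIndependent K ![P, Q] := by
  rw [algebraicIndependent_iff]
  intro G hG
  induction hn : G.totalDegree using Nat.strong_induction_on generalizing G with
  | _ n IH =>
  by_contra hG0
  have hpos : 0 < n := hn ▸ totalDegree_pos_of_aeval_eq_zero (algebraMap K _).injective hG0 hG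
  have hpd (i : Fin 2) : pderiv i G = 0 := by
    by_contra hi
    have hval := (mul_eq_zero.1 (aeval_pderiv_mul_jac_eq_zero hG i)).resolve_right hJ
    exact hi (IH _ (hn ▸ totalDegree_pderiv_lt hi) _ hval rfl)
  obtain ⟨H, rfl⟩ := exists_expand_eq_of_dvd _ fun m hm => ringChar_dvd_of_pderiv_eq_zero hpd hm
  rw [totalDegree_expand] at hn
  rcases CharP.char_is_prime_or_zero K (ringChar K) with hp | hp
  · have : Fact (ringChar K).Prime := ⟨hp⟩
    set p := ringChar K
    set H' := map ((frobeniusEquiv K p).symm : K →+* K) H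
    have hpow : H' ^ p = expand p H := map_frobeniusEquiv_symm_pow p H
    have hH' : aeval ![P, Q] H' = 0 :=
      (pow_eq_zero_iff hp.ne_zero).1 (by rw [← map_pow, hpow, hG])
    have hH'0 : H' ≠ 0 := fun h0 => hG0 (by rw [← hpow, h0, zero_pow hp.ne_zero])
    have hlt : H'.totalDegree < n := calc
      H'.totalDegree ≤ H.totalDegree := totalDegree_map_le _ _
      _ < H.totalDegree * p :=
        lt_mul_of_one_lt_right (Nat.pos_of_mul_pos_right (hn ▸ hpos)) hp.one_lt
      _ = n := hn
    exact hH'0 (IH _ hlt _ hH' rfl)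
  · -- `expand 0` only produces constants
    rw [hp, mul_zero] at hn
    omega

/-- **Jacobi's theorem, part (1).** Over any field `F`, if `P, Q ∈ F[x,y]` are
algebraically dependent over `F`, then `Jac(P,Q) = 0`. -/
theorem jacobi_part_one {F : Type*} [Field F]
    (P Q : MvPolynomial (Fin 2) F)
    (hdep : ¬ AlgebraicIndependent F ![P, Q]) :
    Jac P Q = 0 := by
  by_contra hJ
  set K := AlgebraicClosure F
  have hJ' : Jac (map (algebraMap F K) P) (map (algebraMap F K) Q) ≠ 0 := by
    rw [← map_jac, Ne, map_eq_zero_iff _ (map_injective _ (algebraMap F K).injective)]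
    exact hJ
  refine hdep (.of_comp (mapAlgHom (Algebra.ofId F K)) ?_)
  convert (algebraicIndependent_of_jac_ne_zero hJ').restrictScalars (algebraMap F K).injective
    using 1
  ext i
  fin_cases i <;> rfl
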